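/- Fix points y_1,…,y_N ∈ ℝ^p and a pairwise distinct point set x'_1,…,x'_n ∈ ℝ^p with x'_i ≠ y_m for all i, m. Define h^Q({x_i}_{i=1}^n; {x'_j}_{j=1}^n) = (2/(nN)) Σ_{i=1}^n Σ_{m=1}^N { ‖y_m − x_i‖₂²/(2‖y_m − x'_i‖₂) + ‖y_m − x'_i‖₂/2 } − (1/n²) Σ_{i=1}^n Σ_{j=1}^n ( ‖x'_i − x'_j‖₂ + 2(x_i − x'_i)ᵀ(x'_i − x'_j)/‖x'_i − x'_j‖₂ ), where terms with i = j in the second sum are zero. Then (i) h^Q(·; {x'_j}) majorizes Ê(·; {y_m}) at {x'_j}_{j=1}^n, i.e., h^Q({x_i};{x'_j}) ≥ Ê({x_i};{y_m}) for all {x_i} with equality at {x_i} = {x'_j}; and (ii) the unique global minimizer of h^Q(·; {x'_j}) over ({x_i}) ∈ (ℝ^p)^n is given coordinate-wise by x_i = ( Σ_{m=1}^N ‖x'_i − y_m‖₂^{−1} )^{−1} ( (N/n) Σ_{j≠i} (x'_i − x'_j)/‖x'_i − x'_j‖₂ + Σ_{m=1}^N y_m/‖x'_i − y_m‖₂ )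 for i = 1,…,n. -/

import Mathlib

open Finset

/-- The empirical energy objective
`Ê({xᵢ}; {yₘ}) = (2/(nN)) Σᵢ Σₘ ‖yₘ − xᵢ‖ − (1/n²) Σᵢ Σⱼ ‖xᵢ − xⱼ‖`. -/
noncomputable def Ehat {p n N : ℕ} (x : Fin n → EuclideanSpace ℝ (Fin p))
    (y : Fin N → EuclideanSpace ℝ (Fin p)) : ℝ :=
  (2 / ((n : ℝ) * N)) * ∑ i, ∑ m, ‖y m - x i‖
    - (1 / (n : ℝ) ^ 2) * ∑ i, ∑ j, ‖x i - x j‖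

/-- The quadratic surrogate `h^Q({xᵢ}; {x'ⱼ})` (terms with `i = j` in the
second double sum vanish, consistently with Lean's convention `0⁻¹ = 0`). -/
noncomputable def hQ {p n N : ℕ} (x x' : Fin n → EuclideanSpace ℝ (Fin p))
    (y : Fin N → EuclideanSpace ℝ (Fin p)) : ℝ :=
  (2 / ((n : ℝ) * N)) * ∑ i, ∑ m,
      (‖y m - x i‖ ^ 2 / (2 * ‖y m - x' i‖) + ‖y m - x' i‖ / 2)
    - (1 / (n : ℝ) ^ 2) * ∑ i, ∑ j,
      (‖x' i - x' j‖
        + 2 * (inner ℝ (x i - x' i) (x' i - x' j) : ℝ) / ‖x' i - x' j‖)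

/-- The closed-form update map `Mᵢ({x'ⱼ}; {yₘ})`. -/
noncomputable def Mmap {p n N : ℕ} (x' : Fin n → EuclideanSpace ℝ (Fin p))
    (y : Fin N → EuclideanSpace ℝ (Fin p)) (i : Fin n) :
    EuclideanSpace ℝ (Fin p) :=
  (∑ m, ‖x' i - y m‖⁻¹)⁻¹ •
    (((N : ℝ) / n) • ∑ j ∈ Finset.univ.erase i, ‖x' i - x' j‖⁻¹ • (x' i - x' j)
      + ∑ m, ‖x' i - y m‖⁻¹ • y m)

/-!
Majorization holds term by term. Each attraction term uses `t ≤ t² / (2a) + a / 2` for `a > 0`,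
with equality at `t = a`. The repulsion terms for `(i, j)` and `(j, i)` add up to twice the
tangent `⟪xᵢ - xⱼ, x'ᵢ - x'ⱼ⟫ / ‖x'ᵢ - x'ⱼ‖` of the convex function `‖xᵢ - xⱼ‖` at `x'`, so by
Cauchy–Schwarz their sum is at most `2 ‖xᵢ - xⱼ‖`.

For the minimizer: `h^Q(·; x')` is a sum of one quadratic in each `xᵢ`, with leading coefficient
`Sᵢ / (nN)`, where `Sᵢ = ∑ₘ ‖x'ᵢ - yₘ‖⁻¹ > 0`. Completing the square gives
`h^Q(x) = h^Q(M) + ∑ᵢ Sᵢ / (nN) ‖xᵢ - Mᵢ‖²`, so `M` is the unique minimizer.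
-/

open RealInnerProductSpace

section Elementary

variable {E : Type*} [NormedAddCommGroup E] [InnerProductSpace ℝ E]

lemma le_sq_div_add_half {a : ℝ} (ha : 0 < a) (t : ℝ) : t ≤ t ^ 2 / (2 * a) + a / 2 := by
  have hgap : t ^ 2 / (2 * a) + a / 2 - t = (t - a) ^ 2 / (2 * a) := by field_simp; ring
  have : 0 ≤ (t - a) ^ 2 / (2 * a) := by positivity
  linarith

lemma sq_div_add_half_self (a : ℝ) : a ^ 2 / (2 * a) + a / 2 = a := by
  rcases eq_or_ne a 0 with rfl | ha
  · simp
  · field_simp; ring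

lemma sum_sum_le_of_add_swap_le {ι : Type*} [Fintype ι] {f g : ι → ι → ℝ}
    (h : ∀ i j, f i j + f j i ≤ 2 * g i j) : ∑ i, ∑ j, f i j ≤ ∑ i, ∑ j, g i j := by
  have hsum := sum_le_sum fun i (_ : i ∈ univ) => sum_le_sum fun j (_ : j ∈ univ) => h i j
  simp only [sum_add_distrib, ← mul_sum] at hsum
  rw [sum_comm (f := fun i j => f j i)] at hsum
  linarith

lemma linearization_add_swap_le (a b u v : E) :
    (‖a - b‖ + 2 * ⟪u - a, a - b⟫ / ‖a - b‖) + (‖b - a‖ + 2 * ⟪v - b, b - a⟫ / ‖b - a‖)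
      ≤ 2 * ‖u - v‖ := by
  rcases eq_or_ne a b with rfl | hab
  · simp -- both linearizations vanish, as `0⁻¹ = 0`
  have hd : 0 < ‖a - b‖ := norm_sub_pos_iff.2 hab
  have hinner : ⟪u - a, a - b⟫ - ⟪v - b, a - b⟫ = ⟪u - v, a - b⟫ - ‖a - b‖ ^ 2 := by
    rw [← inner_sub_left, ← real_inner_self_eq_norm_sq, ← inner_sub_left]
    congr 1; abel
  have hsum : (‖a - b‖ + 2 * ⟪u - a, a - b⟫ / ‖a - b‖)
      + (‖b - a‖ + 2 * ⟪v - b, b - a⟫ / ‖b - a‖) = 2 * ⟪u - v, a - b⟫ / ‖a - b‖ := by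
    rw [norm_sub_rev b a, ← neg_sub a b, inner_neg_right]
    field_simp
    linear_combination 2 * hinner
  rw [hsum, div_le_iff₀ hd]
  linarith [real_inner_le_norm (u - v) (a - b)]

lemma norm_sub_sq_sub_norm_sub_sq (u v z : E) :
    ‖v - z‖ ^ 2 - ‖u - z‖ ^ 2 = ‖v‖ ^ 2 - ‖u‖ ^ 2 - 2 * ⟪v - u, z⟫ := by
  rw [norm_sub_sq_real, norm_sub_sq_real, inner_sub_left]; ring

lemma sum_mul_norm_sub_sq_sub_inner_eq {ι : Type*} (s : Finset ι) (w : ι → ℝ) (y : ι → E)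
    (c u v : E) (hw : ∑ m ∈ s, w m ≠ 0) :
    ∑ m ∈ s, w m * (‖v - y m‖ ^ 2 - ‖u - y m‖ ^ 2) - 2 * ⟪v - u, c⟫
      = (∑ m ∈ s, w m) * (‖v - (∑ m ∈ s, w m)⁻¹ • (c + ∑ m ∈ s, w m • y m)‖ ^ 2
          - ‖u - (∑ m ∈ s, w m)⁻¹ • (c + ∑ m ∈ s, w m • y m)‖ ^ 2) := by
  simp only [norm_sub_sq_sub_norm_sub_sq, real_inner_smul_right, inner_add_right, inner_sum,
    mul_sub, sum_sub_distrib, ← sum_mul, mul_left_comm _ (2 : ℝ), ← mul_sum]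
  field_simp
  ring

end Elementary

section Surrogate

variable {p n N : ℕ}

lemma Ehat_le_hQ (x x' : Fin n → EuclideanSpace ℝ (Fin p))
    (y : Fin N → EuclideanSpace ℝ (Fin p)) (hxy : ∀ i m, x' i ≠ y m) :
    Ehat x y ≤ hQ x x' y := by
  have hattract : ∑ i, ∑ m, ‖y m - x i‖
      ≤ ∑ i, ∑ m, (‖y m - x i‖ ^ 2 / (2 * ‖y m - x' i‖) + ‖y m - x' i‖ / 2) :=
    sum_le_sum fun i _ => sum_le_sum fun m _ =>
      le_sq_div_add_half (norm_sub_pos_iff.2 (hxy i m).symm) _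
  have hrepel : ∑ i, ∑ j, (‖x' i - x' j‖ + 2 * ⟪x i - x' i, x' i - x' j⟫ / ‖x' i - x' j‖)
      ≤ ∑ i, ∑ j, ‖x i - x j‖ :=
    sum_sum_le_of_add_swap_le fun i j => linearization_add_swap_le _ _ _ _
  exact sub_le_sub (mul_le_mul_of_nonneg_left hattract (by positivity))
    (mul_le_mul_of_nonneg_left hrepel (by positivity))

lemma hQ_self (x' : Fin n → EuclideanSpace ℝ (Fin p)) (y : Fin N → EuclideanSpace ℝ (Fin p)) :
    hQ x' x' y = Ehat x' y := by
  simp only [hQ, Ehat, sq_div_add_half_self, sub_self, inner_zero_left, mul_zero, zero_div,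
    add_zero]

lemma hQ_sub_hQ (x u x' : Fin n → EuclideanSpace ℝ (Fin p))
    (y : Fin N → EuclideanSpace ℝ (Fin p)) :
    hQ x x' y - hQ u x' y = ∑ i,
      (1 / ((n : ℝ) * N) * ∑ m, ‖x' i - y m‖⁻¹ * (‖x i - y m‖ ^ 2 - ‖u i - y m‖ ^ 2)
        - 2 / (n : ℝ) ^ 2 *
          ⟪x i - u i, ∑ j ∈ univ.erase i, ‖x' i - x' j‖⁻¹ • (x' i - x' j)⟫) := by
  have hrepel : ∀ i, ⟪x i - u i, ∑ j ∈ univ.erase i, ‖x' i - x' j‖⁻¹ • (x' i - x' j)⟫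
      = ∑ j, ‖x' i - x' j‖⁻¹ * ⟪x i - u i, x' i - x' j⟫ := fun i => by
    rw [inner_sum, sum_erase _ (by simp)]
    simp only [real_inner_smul_right]
  simp only [hQ, hrepel, mul_sum, ← sum_sub_distrib]
  refine sum_congr rfl fun i _ => ?_
  rw [sub_sub_sub_comm, ← sum_sub_distrib, ← sum_sub_distrib]
  congr 1 <;> refine sum_congr rfl fun m _ => ?_
  · rw [norm_sub_rev (y m) (x i), norm_sub_rev (y m) (u i), norm_sub_rev (y m) (x' i)]
    field_simp
    ring
  · rw [inner_sub_left, inner_sub_left, inner_sub_left]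
    field_simp
    ring

lemma sum_inv_norm_sub_pos (hN : 0 < N) (x' : Fin n → EuclideanSpace ℝ (Fin p))
    (y : Fin N → EuclideanSpace ℝ (Fin p)) (hxy : ∀ i m, x' i ≠ y m) (i : Fin n) :
    0 < ∑ m, ‖x' i - y m‖⁻¹ :=
  sum_pos (fun m _ => inv_pos.2 (norm_sub_pos_iff.2 (hxy i m))) ⟨⟨0, hN⟩, mem_univ _⟩

lemma hQ_eq_hQ_Mmap_add (hN : 0 < N) (x x' : Fin n → EuclideanSpace ℝ (Fin p))
    (y : Fin N → EuclideanSpace ℝ (Fin p)) (hxy : ∀ i m, x' i ≠ y m) :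
    hQ x x' y = hQ (Mmap x' y) x' y
      + ∑ i, (∑ m, ‖x' i - y m‖⁻¹) / ((n : ℝ) * N) * ‖x i - Mmap x' y i‖ ^ 2 := by
  rw [← sub_eq_iff_eq_add', hQ_sub_hQ]
  refine sum_congr rfl fun i _ => ?_
  have hn : (n : ℝ) ≠ 0 := Nat.cast_ne_zero.2 i.pos.ne'
  have hN' : (N : ℝ) ≠ 0 := Nat.cast_ne_zero.2 hN.ne'
  have hsq : ∑ m, ‖x' i - y m‖⁻¹ * (‖x i - y m‖ ^ 2 - ‖Mmap x' y i - y m‖ ^ 2)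
        - 2 * ⟪x i - Mmap x' y i,
          ((N : ℝ) / n) • ∑ j ∈ univ.erase i, ‖x' i - x' j‖⁻¹ • (x' i - x' j)⟫
      = (∑ m, ‖x' i - y m‖⁻¹) * (‖x i - Mmap x' y i‖ ^ 2 - ‖Mmap x' y i - Mmap x' y i‖ ^ 2) :=
    sum_mul_norm_sub_sq_sub_inner_eq _ _ _ _ _ _ (sum_inv_norm_sub_pos hN x' y hxy i).ne'
  rw [sub_self, norm_zero, real_inner_smul_right] at hsq
  -- keep `field_simp` out of the sums
  generalize ∑ m, ‖x' i - y m‖⁻¹ * (‖x i - y m‖ ^ 2 - ‖Mmap x' y i - y m‖ ^ 2) = A at hsq ⊢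
  generalize ⟪x i - Mmap x' y i, ∑ j ∈ univ.erase i, ‖x' i - x' j‖⁻¹ • (x' i - x' j)⟫ = B at hsq ⊢
  generalize ∑ m, ‖x' i - y m‖⁻¹ = S at hsq ⊢
  linear_combination (norm := skip) hsq / ((n : ℝ) * N)
  field_simp
  ring

end Surrogate

theorem hQ_majorizes_and_closed_form_minimizer_general {p n N : ℕ}
    (hN : 0 < N)
    (x' : Fin n → EuclideanSpace ℝ (Fin p))
    (y : Fin N → EuclideanSpace ℝ (Fin p))
    (hxy : ∀ i m, x' i ≠ y m) :
    (∀ x : Fin n → EuclideanSpace ℝ (Fin p), Ehat x y ≤ hQ x x' y) ∧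
    hQ x' x' y = Ehat x' y ∧
    (∀ x : Fin n → EuclideanSpace ℝ (Fin p),
      hQ (Mmap x' y) x' y ≤ hQ x x' y) ∧
    (∀ x : Fin n → EuclideanSpace ℝ (Fin p),
      hQ x x' y = hQ (Mmap x' y) x' y → x = Mmap x' y) := by
  have hcoeff : ∀ i, 0 < (∑ m, ‖x' i - y m‖⁻¹) / ((n : ℝ) * N) := fun i =>
    div_pos (sum_inv_norm_sub_pos hN x' y hxy i)
      (mul_pos (Nat.cast_pos.2 i.pos) (Nat.cast_pos.2 hN))
  have hterm_nonneg : ∀ x : Fin n → EuclideanSpace ℝ (Fin p), ∀ i ∈ univ,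
      0 ≤ (∑ m, ‖x' i - y m‖⁻¹) / ((n : ℝ) * N) * ‖x i - Mmap x' y i‖ ^ 2 :=
    fun x i _ => mul_nonneg (hcoeff i).le (sq_nonneg _)
  refine ⟨fun x => Ehat_le_hQ x x' y hxy, hQ_self x' y, fun x => ?_, fun x hx => ?_⟩
  · rw [hQ_eq_hQ_Mmap_add hN x x' y hxy]
    exact le_add_of_nonneg_right (sum_nonneg (hterm_nonneg x))
  · rw [hQ_eq_hQ_Mmap_add hN x x' y hxy, add_eq_left,
      sum_eq_zero_iff_of_nonneg (hterm_nonneg x)] at hx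
    funext i
    simpa [(hcoeff i).ne', sub_eq_zero] using hx i (mem_univ i)

/-- `h^Q(·; {x'ⱼ})` majorizes `Ê(·; {yₘ})` at `{x'ⱼ}`, and its
unique global minimizer over `(ℝ^p)^n` is given coordinate-wise by the
closed-form map `Mᵢ`. -/
theorem hQ_majorizes_and_closed_form_minimizer {p n N : ℕ}
    (hn : 0 < n) (hN : 0 < N)
    (x' : Fin n → EuclideanSpace ℝ (Fin p))
    (y : Fin N → EuclideanSpace ℝ (Fin p))
    (hdistinct : Function.Injective x')
    (hxy : ∀ i m, x' i ≠ y m) :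
    (∀ x : Fin n → EuclideanSpace ℝ (Fin p), Ehat x y ≤ hQ x x' y) ∧
    hQ x' x' y = Ehat x' y ∧
    (∀ x : Fin n → EuclideanSpace ℝ (Fin p),
      hQ (Mmap x' y) x' y ≤ hQ x x' y) ∧
    (∀ x : Fin n → EuclideanSpace ℝ (Fin p),
      hQ x x' y = hQ (Mmap x' y) x' y → x = Mmap x' y) :=
  hQ_majorizes_and_closed_form_minimizer_general hN x' y hxy
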